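/- Every finite tree with at least two vertices admits a 2-ONCF-coloring. That is, if G is a finite simple connected acyclic graph with |V(G)| ≥ 2, then there is a coloring c : V(G) → {red, blue} such that for every vertex v the open neighborhood N(v) contains a uniquely colored vertex. -/

import Mathlib

/-!
Root the tree at a leaf `r` and color `v` by the parity of `⌊d(r, v) / 2⌋`. A vertex `v ≠ r` has
exactly one neighbor (its parent) closer to `r`, and all its other neighbors are one step
farther; their distances differ from the parent's by exactly two, so they get the other color and
the parent is uniquely colored in `N(v)`. The leaf `r` has a single neighbor.
-/

inductive Color where
  | red
  | blue
deriving DecidableEq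

/-- A coloring `c` of the vertices of `G` is an open-neighborhood conflict-free
coloring if every open neighborhood `N(v)` contains a vertex whose color is unique
in `N(v)`. -/
def IsONCF {V C : Type*} (G : SimpleGraph V) (c : V → C) : Prop :=
  ∀ v : V, ∃ u ∈ G.neighborSet v, ∀ w ∈ G.neighborSet v, w ≠ u → c w ≠ c u

def blockColor (n : ℕ) : Color := if n % 4 < 2 then .red else .blue

lemma blockColor_add_two_ne (n : ℕ) : blockColor (n + 2) ≠ blockColor n := by
  unfold blockColor
  split_ifs <;> first | omega | decide

namespace SimpleGraph

variable {V : Type*} {G : SimpleGraph V}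

lemma IsAcyclic.dist_eq_add_one_of_adj_of_notMem_support (hG : G.IsAcyclic) {r v w : V}
    {p : G.Walk r v} (hp : p.IsPath) (hpd : p.length = G.dist r v) (hadj : G.Adj v w)
    (hw : w ∉ p.support) (hreach : G.Reachable r w) : G.dist r w = G.dist r v + 1 := by
  obtain ⟨q, hq, hqd⟩ := hreach.exists_path_of_dist
  have hv : v ∈ q.support := by
    by_contra hv
    exact hw (hG.mem_support_of_ne_mem_support_of_adj_of_isPath hp hq hadj hv)
  rw [← hqd, hG.path_concat hp hq hadj hv, Walk.length_concat, hpd]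

lemma IsTree.exists_adj_forall_dist_eq_add_two (hG : G.IsTree) {r v : V} (hv : v ≠ r) :
    ∃ u, G.Adj v u ∧ ∀ w, G.Adj v w → w ≠ u → G.dist r w = G.dist r u + 2 := by
  obtain ⟨p, hp, hpd⟩ := hG.connected.exists_path_of_dist r v
  have hnil : ¬p.Nil := fun h => hv h.eq.symm
  have hadj := p.adj_penultimate hnil
  have hparent : G.dist r p.penultimate + 1 = G.dist r v := by
    have := G.dist_le p.dropLast
    have := p.length_dropLast_add_one hnil
    have := hG.dist_eq_dist_add_one_of_adj r hadj
    omega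
  refine ⟨p.penultimate, hadj.symm, fun w hw hwu => ?_⟩
  have hwp : w ∉ p.support := fun h => hwu (hG.isAcyclic.eq_penultimate_of_adj_end hp hw h)
  have := hG.isAcyclic.dist_eq_add_one_of_adj_of_notMem_support hp hpd hw hwp (hG.connected r w)
  omega

end SimpleGraph

/-- Every finite tree (connected acyclic graph) with at least two vertices admits a
2-ONCF-coloring with colors red and blue. -/
theorem tree_two_ONCF {V : Type*} [Fintype V] (G : SimpleGraph V)
    (hconn : G.Connected) (hacyc : G.IsAcyclic) (hcard : 2 ≤ Fintype.card V) :
    ∃ c : V → Color, IsONCF G c := by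
  classical
  have hG : G.IsTree := ⟨hconn, hacyc⟩
  have : Nontrivial V := Fintype.one_lt_card_iff_nontrivial.mp hcard
  obtain ⟨r, hr⟩ := hG.exists_vert_degree_one_of_nontrivial
  obtain ⟨u₀, hu₀, hleaf⟩ := SimpleGraph.degree_eq_one_iff_existsUnique_adj.mp hr
  refine ⟨fun v => blockColor (G.dist r v), fun v => ?_⟩
  by_cases hv : v = r
  · subst hv
    exact ⟨u₀, hu₀, fun w hw hwu => absurd (hleaf w hw) hwu⟩
  · obtain ⟨u, hu, hfar⟩ := hG.exists_adj_forall_dist_eq_add_two hv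
    refine ⟨u, hu, fun w hw hwu => ?_⟩
    simpa only [hfar w hw hwu] using blockColor_add_two_ne _
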